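/- Let N ≥ 1 and let h : ℕ → ℤ/2ℤ be an essentially descendible 2N-periodic function. Then the function ĥ, defined on even positive integers by ĥ(m) = Σ_{k=1}^{v₂(m)} h(m/2^k), satisfies ĥ(m + 2N) = ĥ(m) for all even m ≥ 2N + 1. -/

import Mathlib

open Polynomial

/-- `h : ℕ → ℤ/2ℤ` is `2N`-periodic (on positive integers). -/
def IsPeriodicTwoN (N : ℕ) (h : ℕ → ZMod 2) : Prop :=
  ∀ x, 1 ≤ x → h (x + 2 * N) = h x

/-- The set `T` associated to a `2N`-periodic function `h`: even `x ∈ [1,2N]` such that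
`#{k : 1 ≤ k ≤ v₂(x), h(x/2^k) = 1}` is odd. -/
def Tset (N : ℕ) (h : ℕ → ZMod 2) : Set ℕ :=
  {x | 1 ≤ x ∧ x ≤ 2 * N ∧ Even x ∧
    Odd (((Finset.Icc 1 (padicValNat 2 x)).filter (fun k => h (x / 2 ^ k) = 1)).card)}

/-- `h` is a descendible `2N`-periodic function. -/
def IsDescendible (N : ℕ) (h : ℕ → ZMod 2) : Prop :=
  IsPeriodicTwoN N h ∧
  ∀ x, 1 ≤ x → x ≤ N →
    ((2 * x ∈ Tset N h ∧ N + x ∈ Tset N h) → ¬ h (N + x) = 1) ∧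
    ((2 * x ∈ Tset N h ∧ N + x ∉ Tset N h) → h (N + x) = 1) ∧
    ((2 * x ∉ Tset N h ∧ N + x ∈ Tset N h) → h (N + x) = 1) ∧
    ((2 * x ∉ Tset N h ∧ N + x ∉ Tset N h) → ¬ h (N + x) = 1)

/-- `ĥ(m) = Σ_{k=1}^{v₂(m)} h(m/2^k)`. -/
def hhat (h : ℕ → ZMod 2) (m : ℕ) : ZMod 2 :=
  ∑ k ∈ Finset.Icc 1 (padicValNat 2 m), h (m / 2 ^ k)

/-- `h` is an essentially descendible `2N`-periodic function. -/
def IsEssDescendible (N : ℕ) (h : ℕ → ZMod 2) : Prop :=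
  ∃ g : ℕ → ZMod 2, IsDescendible N g ∧
    (∀ i, 2 * N + 1 ≤ i → h i = g i) ∧
    ∀ m, 1 ≤ m →
      (∑ k ∈ (Finset.range (2 * N + 1)).filter (fun k => 2 ^ k * m ≤ 2 * N), h (2 ^ k * m))
        = ∑ k ∈ (Finset.range (2 * N + 1)).filter (fun k => 2 ^ k * m ≤ 2 * N), g (2 ^ k * m)

/-!
Doubling shifts the valuation by one, so `ĥ(2t) = h(t) + ĥ(t)`. Since `T` is the set where
`ĥ = 1`, the four descendibility conditions for `g` say exactly `g(N+x) = ĥ(2x) + ĥ(N+x)` for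
`x ∈ [1,N]`, i.e. `ĥ(2(N+x)) = ĥ(2x)`. Strong induction then gives `ĥ(y + 2N) = ĥ(y)` for all
`y ≥ 1`: odd `y` is trivial, `y = 2x` with `x ≤ N` is the previous identity, and for
`x = z + N` one combines `2N`-periodicity of `g` with the cases `z` and `2z`. Finally an
essentially descendible `h` agrees with its `g` on all positive integers, because the sums
`Σ h(2^k m)` over `2^k m ≤ 2N` determine `h` on `[1, 2N]` by peeling off their first terms.
-/

section Hhat

variable (f : ℕ → ZMod 2)

lemma hhat_two_mul {t : ℕ} (ht : t ≠ 0) : hhat f (2 * t) = f t + hhat f t := by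
  have hv : padicValNat 2 (2 * t) = padicValNat 2 t + 1 := by
    rw [padicValNat.mul two_ne_zero ht, padicValNat.self one_lt_two, add_comm]
  rw [hhat, hv, ← Finset.add_sum_Ioc_eq_sum_Icc (by omega), ← Finset.Icc_add_one_left_eq_Ioc,
    ← Finset.map_add_right_Icc 1 _ 1, Finset.sum_map]
  simp [pow_succ, mul_comm 2 t, Nat.mul_div_mul_right _ _ two_pos, hhat]

lemma hhat_of_odd {m : ℕ} (hm : Odd m) : hhat f m = 0 := by
  rw [hhat, padicValNat.eq_zero_of_not_dvd (Nat.two_dvd_ne_zero.mpr (Nat.odd_iff.mp hm))]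
  rfl

lemma hhat_eq_card (m : ℕ) :
    hhat f m = ((Finset.Icc 1 (padicValNat 2 m)).filter (fun k => f (m / 2 ^ k) = 1)).card := by
  rw [hhat, ← Finset.sum_boole]
  refine Finset.sum_congr rfl fun k _ => ?_
  generalize f (m / 2 ^ k) = a
  revert a
  decide

lemma mem_Tset_iff_hhat_eq_one {N y : ℕ} (hy1 : 1 ≤ y) (hy2 : y ≤ 2 * N) :
    y ∈ Tset N f ↔ hhat f y = 1 := by
  rcases Nat.even_or_odd y with hy | hy
  · simp [Tset, hy, hy1, hy2, hhat_eq_card, ZMod.natCast_eq_one_iff_odd]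
  · simp [Tset, hhat_of_odd f hy, Nat.not_even_iff_odd.mpr hy]

lemma hhat_congr {g : ℕ → ZMod 2} (hfg : ∀ t, 1 ≤ t → f t = g t) {m : ℕ}
    (hm : m ≠ 0) :
    hhat f m = hhat g m := by
  refine Finset.sum_congr rfl fun k hk => hfg _ (Nat.div_pos ?_ (Nat.two_pow_pos k))
  exact Nat.le_of_dvd (by omega)
    ((pow_dvd_pow 2 (Finset.mem_Icc.mp hk).2).trans pow_padicValNat_dvd)

end Hhat

namespace IsDescendible

variable {N : ℕ} {g : ℕ → ZMod 2}

lemma apply_add (hg : IsDescendible N g) {x : ℕ} (hx1 : 1 ≤ x) (hx2 : x ≤ N) :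
    g (N + x) = hhat g (2 * x) + hhat g (N + x) := by
  have conds := hg.2 x hx1 hx2
  simp only [mem_Tset_iff_hhat_eq_one g (by omega : 1 ≤ 2 * x) (by omega : 2 * x ≤ 2 * N),
    mem_Tset_iff_hhat_eq_one g (by omega : 1 ≤ N + x) (by omega : N + x ≤ 2 * N)] at conds
  generalize g (N + x) = a, hhat g (2 * x) = b, hhat g (N + x) = c at conds ⊢
  revert a b c
  decide

lemma hhat_add_two_mul (hN : 1 ≤ N) (hg : IsDescendible N g) :
    ∀ y, 1 ≤ y → hhat g (y + 2 * N) = hhat g y := by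
  intro y
  induction y using Nat.strong_induction_on with
  | _ y ih =>
  intro hy
  obtain ⟨x, rfl | rfl⟩ := Nat.even_or_odd' y
  swap
  · have hodd := odd_two_mul_add_one x
    rw [hhat_of_odd g hodd, hhat_of_odd g (hodd.add_even (even_two_mul N))]
  rw [← mul_add, hhat_two_mul g (by omega)]
  rcases le_or_gt x N with hxN | hNx
  · rw [add_comm x N, hg.apply_add (by omega) hxN, add_assoc, CharTwo.add_self_eq_zero, add_zero]
  · obtain ⟨z, rfl⟩ : ∃ z, x = z + N := ⟨x - N, by omega⟩
    calc g (z + N + N) + hhat g (z + N + N)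
        = g (z + 2 * N) + hhat g (z + 2 * N) := by rw [add_assoc, ← two_mul]
      _ = g z + hhat g z := by rw [hg.1 z (by omega), ih z (by omega) (by omega)]
      _ = hhat g (2 * z + 2 * N) := by
        rw [ih (2 * z) (by omega) (by omega), hhat_two_mul g (by omega)]
      _ = hhat g (2 * (z + N)) := by rw [mul_add]

end IsDescendible

def doublingSum (N : ℕ) (f : ℕ → ZMod 2) (m : ℕ) : ZMod 2 :=
  ∑ k ∈ (Finset.range (2 * N + 1)).filter (fun k => 2 ^ k * m ≤ 2 * N), f (2 ^ k * m)

section DoublingSum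

variable {N : ℕ}

lemma doublingSum_eq_add (f : ℕ → ZMod 2) {t : ℕ} (ht1 : 1 ≤ t) (ht2 : t ≤ 2 * N) :
    doublingSum N f t = f t + doublingSum N f (2 * t) := by
  have hlast : ¬ 2 ^ (2 * N + 1) * t ≤ 2 * N := by
    have := Nat.le_mul_of_pos_right (2 ^ (2 * N + 1)) ht1
    have := (2 * N + 1).lt_two_pow_self
    omega
  have hextend :
      ∑ k ∈ Finset.range (2 * N + 1), (if 2 ^ k * t ≤ 2 * N then f (2 ^ k * t) else 0) =
        ∑ k ∈ Finset.range (2 * N + 2), (if 2 ^ k * t ≤ 2 * N then f (2 ^ k * t) else 0) := by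
    rw [Finset.sum_range_succ _ (2 * N + 1), if_neg hlast, add_zero]
  rw [doublingSum, doublingSum, Finset.sum_filter, Finset.sum_filter, hextend,
    Finset.sum_range_succ', pow_zero, one_mul, if_pos ht2, add_comm]
  simp only [pow_succ, mul_assoc]

lemma eq_of_doublingSum_eq {f g : ℕ → ZMod 2} (htail : ∀ i, 2 * N + 1 ≤ i → f i = g i)
    (hsum : ∀ m, 1 ≤ m → doublingSum N f m = doublingSum N g m) (t : ℕ) (ht : 1 ≤ t) :
    f t = g t := by
  by_cases ht2 : t ≤ 2 * N
  · have := hsum t ht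
    rw [doublingSum_eq_add f ht ht2, doublingSum_eq_add g ht ht2, hsum (2 * t) (by omega)] at this
    exact add_right_cancel this
  · exact htail t (by omega)

lemma IsEssDescendible.exists_isDescendible_eq_on_pos {h : ℕ → ZMod 2}
    (hh : IsEssDescendible N h) : ∃ g, IsDescendible N g ∧ ∀ t, 1 ≤ t → h t = g t :=
  let ⟨g, hg, htail, hsum⟩ := hh
  ⟨g, hg, eq_of_doublingSum_eq htail hsum⟩

end DoublingSum

theorem hhat_eventually_periodic_of_essDescendible (N : ℕ) (hN : 1 ≤ N)
    (h : ℕ → ZMod 2) (hh : IsEssDescendible N h) :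
    ∀ m, 2 * N + 1 ≤ m → Even m → hhat h (m + 2 * N) = hhat h m := by
  intro m hm _
  obtain ⟨g, hg, hgh⟩ := hh.exists_isDescendible_eq_on_pos
  rw [hhat_congr h hgh (by omega), hhat_congr h hgh (by omega)]
  exact hg.hhat_add_two_mul hN m (by omega)
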